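/- Expected number of iterations of the randomized 2-SAT algorithm: Let φ be a satisfiable 2-SAT formula over n Boolean variables. Consider the random process of truth assignments (a_t)_{t∈ℕ} where a_0 is arbitrary and, at each step t, if a_t does not satisfy φ then a clause of φ unsatisfied by a_t is selected (the selection may depend arbitrarily on the entire history), one of the two variables occurring in that clause is chosen uniformly at random, and a_{t+1} is obtained from a_t by flipping the truth value of that variable; if a_t satisfies φ then a_{t+1} = a_t. Let T = inf{t ∈ ℕ : a_t satisfies φ}. Then E[T] ≤ n². -/

import Mathlib

set_option autoImplicit false

open MeasureTheory ProbabilityTheory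

/-- The first-hitting time of the time-dependent predicate `P` (valued in `ℝ≥0∞`,
so that it is `∞` when `P` is never satisfied). -/
noncomputable def hitTime {Ω : Type*} (P : ℕ → Ω → Prop) (ω : Ω) : ENNReal :=
  sInf {t : ENNReal | ∃ n : ℕ, t = n ∧ P n ω}

/-- A literal over `n` Boolean variables: a variable together with a polarity. -/
abbrev Literal (n : ℕ) := Fin n × Bool

/-- A 2-SAT clause: the disjunction of two literals. -/
abbrev Clause2 (n : ℕ) := Literal n × Literal n

/-- The assignment `a` satisfies the literal `l`. -/
def LitSat {n : ℕ} (a : Fin n → Bool) (l : Literal n) : Prop := a l.1 = l.2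

/-- The assignment `a` satisfies the 2-clause `cl` (one of the literals is true). -/
def ClauseSat {n : ℕ} (a : Fin n → Bool) (cl : Clause2 n) : Prop :=
  LitSat a cl.1 ∨ LitSat a cl.2

/-- The assignment `a` satisfies the 2-SAT formula `φ` (a conjunction of 2-clauses). -/
def FormulaSat {n : ℕ} (φ : Finset (Clause2 n)) (a : Fin n → Bool) : Prop :=
  ∀ cl ∈ φ, ClauseSat a cl

/-! Fix a satisfying assignment `β` and let `k` be the Hamming distance from the current
assignment to `β`. A clause that is false under the current assignment is true under `β`, so
one of its two variables disagrees with `β`: with probability at least `1/2` the step moves `k`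
to `k - 1`, and otherwise to `k ± 1`. The potential `k (2n - k)` is increasing on `[0, n]` with
second difference `-2`, so, conditionally on the history (which fixes the current assignment
and the selected clause, while the coin stays fair), its expectation drops by at least
`P(T > t)` at step `t`. Summing, `E[T] = ∑ P(T > t)` is at most the initial potential, `≤ n²`. -/

open Function
open scoped ENNReal

theorem hammingDist_update_not_of_eq {ι : Type*} [Fintype ι] [DecidableEq ι] {x y : ι → Bool}
    {v : ι} (h : x v = y v) : hammingDist (update x v (!x v)) y = hammingDist x y + 1 := by
  have : Finset.univ.filter (fun i => update x v (!x v) i ≠ y i) =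
      insert v (Finset.univ.filter fun i => x i ≠ y i) := by
    ext i
    rcases eq_or_ne i v with rfl | hi <;> simp_all
  rw [hammingDist, this, Finset.card_insert_of_notMem (by simpa using h), hammingDist]

theorem hammingDist_update_not_of_ne {ι : Type*} [Fintype ι] [DecidableEq ι] {x y : ι → Bool}
    {v : ι} (h : x v ≠ y v) : hammingDist (update x v (!x v)) y + 1 = hammingDist x y := by
  have : Finset.univ.filter (fun i => update x v (!x v) i ≠ y i) =
      (Finset.univ.filter fun i => x i ≠ y i).erase v := by
    ext i
    rcases eq_or_ne i v with rfl | hi <;> simp_all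
  rw [hammingDist, this, Finset.card_erase_add_one (by simpa using h), hammingDist]

theorem hammingDist_update_not {ι : Type*} [Fintype ι] [DecidableEq ι] (x y : ι → Bool) (v : ι) :
    hammingDist (update x v (!x v)) y + 1 = hammingDist x y ∨
      hammingDist (update x v (!x v)) y = hammingDist x y + 1 :=
  (em (x v = y v)).elim (fun h => .inr (hammingDist_update_not_of_eq h))
    (fun h => .inl (hammingDist_update_not_of_ne h))

def potential (n k : ℕ) : ℕ := k * (2 * n - k)

theorem potential_le (n k : ℕ) : potential n k ≤ n ^ 2 := by
  unfold potential
  rcases le_total k (2 * n) with h | h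
  · zify [h]
    nlinarith [sq_nonneg ((n : ℤ) - k)]
  · simp [Nat.sub_eq_zero_of_le h]

theorem potential_add_potential_add_two_le {n x d₁ d₂ : ℕ} (hx : x ≤ n)
    (h₁ : d₁ + 1 = x ∨ d₁ = x + 1) (h₂ : d₂ + 1 = x ∨ d₂ = x + 1)
    (hdown : d₁ + 1 = x ∨ d₂ + 1 = x) :
    potential n d₁ + potential n d₂ + 2 ≤ 2 * potential n x := by
  have cast : ∀ d ≤ 2 * n, (potential n d : ℤ) = d * (2 * n - d) := by
    intro d hd
    simp [potential, Nat.cast_sub hd]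
  zify
  rw [cast d₁ (by omega), cast d₂ (by omega), cast x (by omega)]
  rcases h₁ with h₁ | h₁ <;> rcases h₂ with h₂ | h₂ <;> rcases hdown with h | h <;>
    first | omega | (zify at h₁ h₂ h; nlinarith)

theorem hitTime_le_tsum_indicator {Ω : Type*} (P : ℕ → Ω → Prop) (ω : Ω) :
    hitTime P ω ≤ ∑' t, {ω | ¬ P t ω}.indicator 1 ω := by
  classical
  by_cases h : ∃ t, P t ω
  · calc hitTime P ω ≤ (Nat.find h : ℝ≥0∞) := sInf_le ⟨_, rfl, Nat.find_spec h⟩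
      _ = ∑ t ∈ Finset.range (Nat.find h), {ω | ¬ P t ω}.indicator 1 ω := by
        rw [Finset.sum_congr rfl fun t ht => Set.indicator_of_mem
          (Nat.find_min h (Finset.mem_range.mp ht)) _]
        simp
      _ ≤ _ := ENNReal.sum_le_tsum _
  · simp only [not_exists] at h
    simp [h]

theorem lintegral_hitTime_le {Ω : Type*} [MeasurableSpace Ω] (μ : Measure Ω)
    {P : ℕ → Ω → Prop} (hP : ∀ t, MeasurableSet {ω | ¬ P t ω}) :
    ∫⁻ ω, hitTime P ω ∂μ ≤ ∑' t, μ {ω | ¬ P t ω} :=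
  calc ∫⁻ ω, hitTime P ω ∂μ ≤ ∫⁻ ω, ∑' t, {ω | ¬ P t ω}.indicator 1 ω ∂μ :=
        lintegral_mono (hitTime_le_tsum_indicator P)
    _ = ∑' t, μ {ω | ¬ P t ω} := by
        rw [lintegral_tsum fun t => (measurable_one.indicator (hP t)).aemeasurable]
        simp only [lintegral_indicator_one (hP _)]

theorem ENNReal.tsum_le_of_add_le {u v : ℕ → ℝ≥0∞} (h : ∀ t, u t + v (t + 1) ≤ v t) :
    ∑' t, u t ≤ v 0 := by
  have partial_sums : ∀ N, ∑ t ∈ Finset.range N, u t + v N ≤ v 0 := by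
    intro N
    induction N with
    | zero => simp
    | succ N ih =>
      calc ∑ t ∈ Finset.range (N + 1), u t + v (N + 1)
          = ∑ t ∈ Finset.range N, u t + (u N + v (N + 1)) := by
            rw [Finset.sum_range_succ, add_assoc]
        _ ≤ v 0 := le_trans (by gcongr; exact h N) ih
  exact ENNReal.tsum_le_of_sum_range_le fun N => le_trans le_self_add (partial_sums N)

theorem lintegral_eq_tsum_fiber {Ω S : Type*} [MeasurableSpace Ω] [Countable S]
    {μ : Measure Ω} {X : Ω → S} (hX : ∀ s, MeasurableSet (X ⁻¹' {s})) (f : Ω → ℝ≥0∞) :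
    ∫⁻ ω, f ω ∂μ = ∑' s, ∫⁻ ω in X ⁻¹' {s}, f ω ∂μ := by
  rw [← lintegral_iUnion hX (pairwise_disjoint_fiber X), ← Set.preimage_iUnion,
    Set.iUnion_of_singleton, Set.preimage_univ, setLIntegral_univ]

theorem lintegral_mono_fiberwise {Ω S : Type*} [MeasurableSpace Ω] [Countable S]
    {μ : Measure Ω} {X : Ω → S} (hX : ∀ s, MeasurableSet (X ⁻¹' {s})) {f g : Ω → ℝ≥0∞}
    (h : ∀ ω₀, ∫⁻ ω in X ⁻¹' {X ω₀}, f ω ∂μ ≤ ∫⁻ ω in X ⁻¹' {X ω₀}, g ω ∂μ) :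
    ∫⁻ ω, f ω ∂μ ≤ ∫⁻ ω, g ω ∂μ := by
  rw [lintegral_eq_tsum_fiber hX, lintegral_eq_tsum_fiber hX]
  refine ENNReal.tsum_le_tsum fun s => ?_
  by_cases hs : s ∈ Set.range X
  · obtain ⟨ω₀, rfl⟩ := hs
    exact h ω₀
  · simp [Set.preimage_singleton_eq_empty.mpr hs]

theorem measure_inter_eq_half_of_cond_eq_half {Ω : Type*} [MeasurableSpace Ω]
    {μ : Measure Ω} [IsFiniteMeasure μ] {A B : Set Ω} (hA : MeasurableSet A)
    (h : μ A ≠ 0 → μ[B|A] = 1 / 2) : μ (A ∩ B) = μ A / 2 := by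
  rcases eq_or_ne (μ A) 0 with h0 | h0
  · simp [h0, measure_mono_null Set.inter_subset_left h0]
  have hcond := h h0
  rw [cond_apply hA] at hcond
  calc μ (A ∩ B) = μ A * ((μ A)⁻¹ * μ (A ∩ B)) := by
        rw [← mul_assoc, ENNReal.mul_inv_cancel h0 (measure_ne_top μ A), one_mul]
    _ = μ A / 2 := by rw [hcond, mul_one_div]

theorem setLIntegral_comp_fair_coin {Ω : Type*} [MeasurableSpace Ω] {μ : Measure Ω}
    [IsFiniteMeasure μ] {A : Set Ω} (hA : MeasurableSet A) {X : Ω → Bool} (hX : Measurable X)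
    (hfair : μ A ≠ 0 → μ[{ω | X ω = true}|A] = 1 / 2) (g : Bool → ℝ≥0∞) :
    ∫⁻ ω in A, g (X ω) ∂μ = (g true + g false) * (μ A / 2) := by
  have hfiber : ∀ b, MeasurableSet (X ⁻¹' {b}) := fun b => hX (measurableSet_singleton b)
  have htrue : μ (A ∩ X ⁻¹' {true}) = μ A / 2 :=
    measure_inter_eq_half_of_cond_eq_half hA hfair
  have hfalse : μ (A ∩ X ⁻¹' {false}) = μ A / 2 := by
    have hsplit := measure_inter_add_sdiff (μ := μ) A (hfiber true)
    have hdiff : A \ X ⁻¹' {true} = A ∩ X ⁻¹' {false} := by ext; simp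
    rw [htrue, hdiff, add_comm] at hsplit
    rw [ENNReal.eq_sub_of_add_eq' (measure_ne_top μ A) hsplit,
      ENNReal.sub_half (measure_ne_top μ A)]
  have hconst : ∀ b, ∫⁻ ω in X ⁻¹' {b}, g (X ω) ∂μ.restrict A = g b * (μ A / 2) := by
    intro b
    rw [setLIntegral_congr_fun (hfiber b) fun ω (hω : X ω = b) => by rw [hω],
      setLIntegral_const, Measure.restrict_apply (hfiber b), Set.inter_comm]
    cases b <;> simp only [htrue, hfalse]
  rw [lintegral_eq_tsum_fiber hfiber, tsum_fintype, Fintype.sum_bool, hconst, hconst, add_mul]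

def history {Ω α β γ : Type*} (x₀ : Ω → α) (sel : ℕ → Ω → β) (pick : ℕ → Ω → γ) (t : ℕ)
    (ω : Ω) : α × (Fin (t + 1) → β) × (Fin t → γ) :=
  (x₀ ω, fun i => sel i ω, fun i => pick i ω)

theorem history_preimage_singleton {Ω α β γ : Type*} (x₀ : Ω → α) (sel : ℕ → Ω → β)
    (pick : ℕ → Ω → γ) (t : ℕ) (ω₀ : Ω) :
    history x₀ sel pick t ⁻¹' {history x₀ sel pick t ω₀} =
      {ω | x₀ ω = x₀ ω₀ ∧ (∀ i ≤ t, sel i ω = sel i ω₀) ∧ ∀ i < t, pick i ω = pick i ω₀} := by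
  ext ω
  simp [history, funext_iff, Fin.forall_iff]

theorem eq_of_forall_input_eq {Ω α β : Type*} {x : ℕ → Ω → α} {u : ℕ → Ω → β}
    (next : α → β → α) (hnext : ∀ t ω, x (t + 1) ω = next (x t ω) (u t ω)) {ω ω' : Ω}
    (h₀ : x 0 ω = x 0 ω') {t : ℕ} (hu : ∀ i < t, u i ω = u i ω') : x t ω = x t ω' := by
  induction t with
  | zero => exact h₀
  | succ t ih =>
    rw [hnext, hnext, ih fun i hi => hu i (by omega), hu t (by omega)]

section TwoSat

variable {n : ℕ}

theorem potential_hammingDist_flip_clause_le {α β : Fin n → Bool} {c : Clause2 n}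
    (hβ : ClauseSat β c) (hα : ¬ ClauseSat α c) :
    potential n (hammingDist (update α c.1.1 (!α c.1.1)) β) +
      potential n (hammingDist (update α c.2.1 (!α c.2.1)) β) + 2 ≤
      2 * potential n (hammingDist α β) := by
  refine potential_add_potential_add_two_le ?_ (hammingDist_update_not α β _)
    (hammingDist_update_not α β _) ?_
  · simpa using hammingDist_le_card_fintype (x := α) (y := β)
  · simp only [ClauseSat, LitSat, not_or] at hα hβ
    rcases hβ with h | h
    · exact .inl (hammingDist_update_not_of_ne (h ▸ hα.1))
    · exact .inr (hammingDist_update_not_of_ne (h ▸ hα.2))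

open Classical in
noncomputable def walkStep (φ : Finset (Clause2 n)) (α : Fin n → Bool) (c : Clause2 n)
    (b : Bool) : Fin n → Bool :=
  if FormulaSat φ α then α
  else update α (if b then c.1.1 else c.2.1) (!α (if b then c.1.1 else c.2.1))

theorem measurableSet_not_formulaSat {Ω : Type*} [MeasurableSpace Ω] (φ : Finset (Clause2 n))
    {x : Ω → Fin n → Bool} (hx : Measurable x) : MeasurableSet {ω | ¬ FormulaSat φ (x ω)} :=
  hx (MeasurableSet.of_discrete (s := {α | ¬ FormulaSat φ α}))

theorem setLIntegral_potential_walkStep_le {Ω : Type*} [MeasurableSpace Ω] {μ : Measure Ω}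
    [IsFiniteMeasure μ] {φ : Finset (Clause2 n)} {β : Fin n → Bool} (hβ : FormulaSat φ β)
    {F : Set Ω} (hF : MeasurableSet F) {x y : Ω → Fin n → Bool} {X : Ω → Bool}
    (hX : Measurable X) {α : Fin n → Bool} {c : Clause2 n}
    (hc : ¬ FormulaSat φ α → c ∈ φ ∧ ¬ ClauseSat α c) (hx : ∀ ω ∈ F, x ω = α)
    (hy : ∀ ω ∈ F, y ω = walkStep φ α c (X ω))
    (hfair : μ F ≠ 0 → μ[{ω | X ω = true}|F] = 1 / 2) :
    ∫⁻ ω in F, ({ω | ¬ FormulaSat φ (x ω)}.indicator 1 ω +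
        (potential n (hammingDist (y ω) β) : ℝ≥0∞)) ∂μ ≤
      ∫⁻ ω in F, (potential n (hammingDist (x ω) β) : ℝ≥0∞) ∂μ := by
  by_cases hα : FormulaSat φ α
  · refine le_of_eq (setLIntegral_congr_fun hF fun ω hω => ?_)
    simp [hx ω hω, hy ω hω, walkStep, hα]
  obtain ⟨hcφ, hcα⟩ := hc hα
  set P : ℝ≥0∞ := (potential n (hammingDist α β) : ℝ≥0∞)
  set g : Bool → ℝ≥0∞ := fun b => potential n (hammingDist (walkStep φ α c b) β)
  have hg : g true + g false + 2 ≤ 2 * P := by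
    simp only [g, P, walkStep, if_neg hα]
    exact_mod_cast potential_hammingDist_flip_clause_le (hβ c hcφ) hcα
  calc ∫⁻ ω in F, ({ω | ¬ FormulaSat φ (x ω)}.indicator 1 ω +
          (potential n (hammingDist (y ω) β) : ℝ≥0∞)) ∂μ
      = ∫⁻ ω in F, (1 + g (X ω)) ∂μ :=
        setLIntegral_congr_fun hF fun ω hω => by simp [hx ω hω, hy ω hω, hα, g]
    _ = (g true + g false + 2) * (μ F / 2) := by
        rw [lintegral_add_left measurable_const, setLIntegral_const, one_mul,
          setLIntegral_comp_fair_coin hF hX hfair]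
        nth_rewrite 1 [← ENNReal.add_halves (μ F)]
        ring
    _ ≤ 2 * P * (μ F / 2) := by gcongr
    _ = ∫⁻ ω in F, (potential n (hammingDist (x ω) β) : ℝ≥0∞) ∂μ := by
        rw [setLIntegral_congr_fun hF fun ω hω => by rw [hx ω hω], setLIntegral_const,
          mul_comm 2, mul_assoc, ENNReal.mul_div_cancel two_ne_zero ENNReal.ofNat_ne_top]

theorem lintegral_potential_walk_drift {Ω : Type*} [MeasurableSpace Ω] {μ : Measure Ω}
    [IsFiniteMeasure μ] {φ : Finset (Clause2 n)} {β : Fin n → Bool} (hβ : FormulaSat φ β)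
    {a : ℕ → Ω → Fin n → Bool} {sel : ℕ → Ω → Clause2 n} {pick : ℕ → Ω → Bool}
    (hma : ∀ t, Measurable (a t)) (hmsel : ∀ t, Measurable (sel t))
    (hmpick : ∀ t, Measurable (pick t))
    (hnext : ∀ t ω, a (t + 1) ω = walkStep φ (a t ω) (sel t ω) (pick t ω))
    (hsel : ∀ t ω, ¬ FormulaSat φ (a t ω) → sel t ω ∈ φ ∧ ¬ ClauseSat (a t ω) (sel t ω))
    (hfair : ∀ t : ℕ, ∀ a₀ : Fin n → Bool, ∀ f : ℕ → Clause2 n, ∀ g : ℕ → Bool,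
      μ {ω | a 0 ω = a₀ ∧ (∀ i ≤ t, sel i ω = f i) ∧ ∀ i < t, pick i ω = g i} ≠ 0 →
      μ[{ω | pick t ω = true}|
        {ω | a 0 ω = a₀ ∧ (∀ i ≤ t, sel i ω = f i) ∧ ∀ i < t, pick i ω = g i}] = 1 / 2)
    (t : ℕ) :
    μ {ω | ¬ FormulaSat φ (a t ω)} +
        ∫⁻ ω, (potential n (hammingDist (a (t + 1) ω) β) : ℝ≥0∞) ∂μ ≤
      ∫⁻ ω, (potential n (hammingDist (a t ω) β) : ℝ≥0∞) ∂μ := by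
  set H := history (a 0) sel pick t
  have hHm : Measurable H := (hma 0).prodMk
    ((measurable_pi_lambda _ fun i : Fin (t + 1) => hmsel i).prodMk
      (measurable_pi_lambda _ fun i : Fin t => hmpick i))
  have hH : ∀ s, MeasurableSet (H ⁻¹' {s}) := fun s => hHm (measurableSet_singleton s)
  have hunsat := measurableSet_not_formulaSat φ (hma t)
  rw [← lintegral_indicator_one hunsat, ← lintegral_add_left (measurable_one.indicator hunsat)]
  refine lintegral_mono_fiberwise hH fun ω₀ => ?_
  have hfiber := history_preimage_singleton (a 0) sel pick t ω₀
  have hcur : ∀ ω ∈ H ⁻¹' {H ω₀}, a t ω = a t ω₀ := by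
    intro ω hω
    rw [hfiber] at hω
    exact eq_of_forall_input_eq (u := fun i ω => (sel i ω, pick i ω))
      (fun α cb => walkStep φ α cb.1 cb.2) hnext hω.1
      fun i hi => Prod.ext (hω.2.1 i hi.le) (hω.2.2 i hi)
  have hclause : ∀ ω ∈ H ⁻¹' {H ω₀}, sel t ω = sel t ω₀ := by
    intro ω hω
    rw [hfiber] at hω
    exact hω.2.1 t le_rfl
  refine setLIntegral_potential_walkStep_le hβ (hH _) (hmpick t) (hsel t ω₀) hcur
    (fun ω hω => by rw [hnext, hcur ω hω, hclause ω hω]) ?_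
  rw [hfiber]
  exact hfair t _ _ _

end TwoSat

/-- **Expected number of iterations of the randomized 2-SAT algorithm.**
`φ` is a satisfiable 2-SAT formula over `n` variables. `a t` is the assignment after `t`
steps; as long as `a t` does not satisfy `φ`, an unsatisfied clause `sel t` is selected
(arbitrarily, depending on the history) and the value of a uniformly random one of its
two variables (chosen by the fair coin `pick t`) is flipped. `T` is the first time the
assignment satisfies `φ`; then `E[T] ≤ n²`. -/
theorem randomized_two_sat_expected_iterations
    (n : ℕ) (φ : Finset (Clause2 n)) (hsat : ∃ a : Fin n → Bool, FormulaSat φ a)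
    {Ω : Type} [MeasurableSpace Ω] (μ : Measure Ω) [IsProbabilityMeasure μ]
    (a : ℕ → Ω → Fin n → Bool) (sel : ℕ → Ω → Clause2 n) (pick : ℕ → Ω → Bool)
    (hma : ∀ t, Measurable (a t)) (hmsel : ∀ t, Measurable (sel t))
    (hmpick : ∀ t, Measurable (pick t))
    (hstop : ∀ t ω, FormulaSat φ (a t ω) → a (t + 1) ω = a t ω)
    (hsel : ∀ t ω, ¬ FormulaSat φ (a t ω) →
      sel t ω ∈ φ ∧ ¬ ClauseSat (a t ω) (sel t ω))
    (hstep : ∀ t ω, ¬ FormulaSat φ (a t ω) →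
      a (t + 1) ω = Function.update (a t ω)
        (if pick t ω then (sel t ω).1.1 else (sel t ω).2.1)
        (! a t ω (if pick t ω then (sel t ω).1.1 else (sel t ω).2.1)))
    (hfair : ∀ t : ℕ, ∀ a₀ : Fin n → Bool, ∀ f : ℕ → Clause2 n, ∀ g : ℕ → Bool,
      μ {ω | a 0 ω = a₀ ∧ (∀ i ≤ t, sel i ω = f i) ∧ ∀ i < t, pick i ω = g i} ≠ 0 →
      (ProbabilityTheory.cond μ
          {ω | a 0 ω = a₀ ∧ (∀ i ≤ t, sel i ω = f i) ∧ ∀ i < t, pick i ω = g i})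
        {ω | pick t ω = true} = 1 / 2) :
    ∫⁻ ω, hitTime (fun t ω => FormulaSat φ (a t ω)) ω ∂μ ≤ ((n : ENNReal)) ^ 2 := by
  obtain ⟨β, hβ⟩ := hsat
  have hnext : ∀ t ω, a (t + 1) ω = walkStep φ (a t ω) (sel t ω) (pick t ω) := by
    intro t ω
    by_cases h : FormulaSat φ (a t ω)
    · rw [hstop t ω h, walkStep, if_pos h]
    · rw [hstep t ω h, walkStep, if_neg h]
  calc ∫⁻ ω, hitTime (fun t ω => FormulaSat φ (a t ω)) ω ∂μ
      ≤ ∑' t, μ {ω | ¬ FormulaSat φ (a t ω)} :=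
        lintegral_hitTime_le μ fun t => measurableSet_not_formulaSat φ (hma t)
    _ ≤ ∫⁻ ω, (potential n (hammingDist (a 0 ω) β) : ℝ≥0∞) ∂μ :=
        ENNReal.tsum_le_of_add_le
          (lintegral_potential_walk_drift hβ hma hmsel hmpick hnext hsel hfair)
    _ ≤ ∫⁻ _, (n : ℝ≥0∞) ^ 2 ∂μ := lintegral_mono fun ω => by
          rw [← Nat.cast_pow]; exact Nat.cast_le.mpr (potential_le n _)
    _ = (n : ℝ≥0∞) ^ 2 := by simp
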